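/- Suppose f : X∖C → X (as in the context) is strongly transitive and has a periodic point (Per(f) ≠ ∅). Let ℓ = min{n ∈ ℕ : Fix(f^n) ≠ ∅}. Then there is an open set V ⊆ X such that: (1) V ∪ f*(V) ∪ ⋯ ∪ (f*)^{ℓ−1}(V) ⊇ X∖C; (2) (f*)^ℓ(V) ⊆ V; and (3) the restriction f^{ℓj}|_V is strongly transitive for every j ≥ 1. -/

import Mathlib

open Set Function

variable {X : Type*} [MetricSpace X]

/-- `n`-step preimage of `A` under the partial map `g` (defined on `good`),
relative to the ambient set `W`: the first `n` iterates must avoid the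
complement of `good` and stay in `W`. -/
def preImg (g : X → X) (good W : Set X) (n : ℕ) (A : Set X) : Set X :=
  {x | x ∈ W ∧ (∀ j < n, g^[j] x ∈ good ∩ W) ∧ g^[n] x ∈ A}

/-- The α-limit set `α_g(x) = ⋂_{n≥0} closure (⋃_{k≥0} g^{-k}(g^{-n}(x)))`. -/
def alphaLim (g : X → X) (good W : Set X) (x : X) : Set X :=
  ⋂ n : ℕ, closure (⋃ k : ℕ, preImg g good W k (preImg g good W n {x}))

/-- `f*(U) = f(U ∖ C)`. -/
def fstar (f : X → X) (C : Set X) (U : Set X) : Set X := f '' (U \ C)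

/-- The set of points whose orbit hits `C` within the first `ℓ` iterates,
i.e. the critical set of the partial map `f^ℓ`. -/
def critSet (f : X → X) (C : Set X) (ℓ : ℕ) : Set X := {x | ∃ j < ℓ, f^[j] x ∈ C}

/-- `g` (defined off the complement of `good`) is strongly transitive:
`α_g(x) = X` for every `x` in the domain. -/
def StronglyTransitiveMap (g : X → X) (good : Set X) : Prop :=
  ∀ x ∈ good, alphaLim g good Set.univ x = Set.univ

/-- `g` is transitive: `α_g(x) = X` for a dense set of points of the domain. -/
def TransitiveMap (g : X → X) (good : Set X) : Prop :=
  Dense {x | x ∈ good ∧ alphaLim g good Set.univ x = Set.univ}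

/-- `g` is transitive on the open set `W`: the α-limit set (in the whole space)
of each point of a dense subset of `W` contains the closure of `W`. -/
def TransitiveOnOpen (g : X → X) (good W : Set X) : Prop :=
  ∃ D : Set X, D ⊆ W ∧ W ⊆ closure D ∧ ∀ x ∈ D, closure W ⊆ alphaLim g good Set.univ x

/-- The restriction `g|_W` is strongly transitive: the α-limit set under the
restriction of every point of `W` is dense in `W`. -/
def StronglyTransitiveOnSet (g : X → X) (good W : Set X) : Prop :=
  ∀ x ∈ W, W ⊆ closure (alphaLim g good W x)

/-!
Let `p` be a periodic point of period `ℓ` whose orbit avoids `C`. Its preimages are dense, so by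
Baire one of the closures `phase r` of the preimages of `p` at times `≡ r [MOD ℓ]` has interior,
and pushing that interior forward along a preimage chain puts `p` in the interior `U` of
`phase 0`. As `f^[t]` maps `phase (r + t)` into `phase r` and pulls `phase r` back into
`phase (r + t)`, the set `V = ⋃ s, (f*)^[ℓ s] (U \ C) ⊆ U` is open, `(f*)^[ℓ]`-invariant and
closed under preimages at times divisible by `ℓ`; dense preimages of the points off `C` then give
the covering.

For the transitivity of `f^[m]` on `V`, `m = ℓ j`, one needs preimages of `x ∈ V` in a given open
set `O` at times divisible by `m`. Going around the cycle of `p` turns a preimage of `p` at a time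
`≡ r [MOD ℓ]` into one at any time `≡ r' [MOD m]` with `r' ≡ r [MOD ℓ]`. So one goes from `O` to
`p`, then from near `p` back to `p` in the residue that corrects the time of a preimage of `x`
chosen near `p`; the phase of that residue contains `p` in its interior because the phases of the
preimage of `x` and of `U` overlap.
-/

section PartialIterates

variable {X : Type*} {f : X → X} {C : Set X}

lemma notMem_critSet_iff {n : ℕ} {x : X} : x ∉ critSet f C n ↔ ∀ i < n, f^[i] x ∉ C := by
  simp [critSet]

lemma critSet_mono {a b : ℕ} (h : a ≤ b) : critSet f C a ⊆ critSet f C b :=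
  fun _ ⟨i, hi, hx⟩ => ⟨i, hi.trans_le h, hx⟩

lemma notMem_critSet_add {a b : ℕ} {x : X} :
    x ∉ critSet f C (a + b) ↔ x ∉ critSet f C a ∧ f^[a] x ∉ critSet f C b := by
  simp only [notMem_critSet_iff, ← iterate_add_apply]
  constructor
  · intro h
    exact ⟨fun i hi => h i (by omega), fun i hi => h (i + a) (by omega)⟩
  · rintro ⟨h₁, h₂⟩ i hi
    rcases lt_or_ge i a with hia | hia
    · exact h₁ i hia
    · simpa [Nat.sub_add_cancel hia] using h₂ (i - a) (by omega)

lemma notMem_critSet_succ {n : ℕ} {x : X} :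
    x ∉ critSet f C (n + 1) ↔ x ∉ C ∧ f x ∉ critSet f C n := by
  rw [add_comm, notMem_critSet_add]
  simp [critSet]

lemma iterate_notMem_critSet {n a b : ℕ} {x : X} (hx : x ∉ critSet f C n) (h : a + b ≤ n) :
    f^[a] x ∉ critSet f C b :=
  (notMem_critSet_add.1 fun hab => hx (critSet_mono h hab)).2

lemma mem_fstar_iterate {n : ℕ} {A : Set X} {x : X} :
    x ∈ (fstar f C)^[n] A ↔ ∃ y ∈ A, y ∉ critSet f C n ∧ f^[n] y = x := by
  induction n generalizing A with
  | zero => simp [critSet]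
  | succ n ih =>
    rw [iterate_succ_apply, ih]
    simp only [fstar, mem_image, mem_sdiff, notMem_critSet_succ, iterate_succ_apply]
    constructor
    · rintro ⟨_, ⟨y, ⟨hyA, hyC⟩, rfl⟩, hy, rfl⟩
      exact ⟨y, hyA, ⟨hyC, hy⟩, rfl⟩
    · rintro ⟨y, hyA, ⟨hyC, hy⟩, rfl⟩
      exact ⟨f y, ⟨y, ⟨hyA, hyC⟩, rfl⟩, hy, rfl⟩

lemma fstar_iterate_mono (n : ℕ) : Monotone (fstar f C)^[n] :=
  Monotone.iterate (fun _ _ h => image_mono (sdiff_subset_sdiff_left h)) n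

def preimagesAt (f : X → X) (C : Set X) (T : Set ℕ) (x : X) : Set X :=
  {y | ∃ t ∈ T, y ∉ critSet f C t ∧ f^[t] y = x}

lemma preimagesAt_Ici_subset {N s : ℕ} {y : X} (hy : y ∉ critSet f C s) :
    preimagesAt f C (Ici N) y ⊆ preimagesAt f C (Ici N) (f^[s] y) := by
  rintro z ⟨t, ht, hz, rfl⟩
  refine ⟨t + s, mem_Ici.2 (le_add_right ht), notMem_critSet_add.2 ⟨hz, hy⟩, ?_⟩
  rw [add_comm, iterate_add_apply]

end PartialIterates

lemma exists_add_mul_modEq {ℓ m t r : ℕ} (hm : 0 < m) (hℓm : ℓ ∣ m) (h : t ≡ r [MOD ℓ]) :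
    ∃ k, t + ℓ * k ≡ r [MOD m] := by
  have hle : t ≤ r + m * t := le_add_left (Nat.le_mul_of_pos_left t hm)
  have hr : r ≡ r + m * t [MOD ℓ] :=
    (Nat.modEq_iff_dvd' (Nat.le_add_right r _)).2 (by simpa using dvd_mul_of_dvd_left hℓm t)
  obtain ⟨k, hk⟩ := (Nat.modEq_iff_dvd' hle).1 (h.trans hr)
  refine ⟨k, ?_⟩
  rw [show t + ℓ * k = r + m * t by omega]
  exact Nat.add_mul_mod_self_left r m t

section PeriodicOrbit

variable {X : Type*} {f : X → X} {C : Set X} {p : X} {ℓ : ℕ}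

lemma notMem_critSet_mul (hp : p ∉ critSet f C ℓ) (hpfix : IsPeriodicPt f ℓ p) (k : ℕ) :
    p ∉ critSet f C (ℓ * k) := by
  induction k with
  | zero => simp [critSet]
  | succ k ih =>
    rw [Nat.mul_succ, notMem_critSet_add, (hpfix.mul_const k).eq]
    exact ⟨ih, hp⟩

lemma notMem_critSet_add_mul_of_iterate_eq (hp : p ∉ critSet f C ℓ)
    (hpfix : IsPeriodicPt f ℓ p) {t : ℕ} {y : X} (hy : y ∉ critSet f C t) (hyp : f^[t] y = p)
    (k : ℕ) : y ∉ critSet f C (t + ℓ * k) ∧ f^[t + ℓ * k] y = p := by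
  refine ⟨notMem_critSet_add.2 ⟨hy, hyp ▸ notMem_critSet_mul hp hpfix k⟩, ?_⟩
  rw [add_comm, iterate_add_apply, hyp, (hpfix.mul_const k).eq]

lemma preimagesAt_modEq_subset (hp : p ∉ critSet f C ℓ) (hpfix : IsPeriodicPt f ℓ p)
    {m r r' : ℕ} (hm : 0 < m) (hℓm : ℓ ∣ m) (hr : r ≡ r' [MOD ℓ]) :
    preimagesAt f C {t | t ≡ r [MOD ℓ]} p ⊆ preimagesAt f C {t | t ≡ r' [MOD m]} p := by
  rintro y ⟨t, ht, hy, hyp⟩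
  obtain ⟨k, hk⟩ := exists_add_mul_modEq hm hℓm (ht.trans hr)
  exact ⟨t + ℓ * k, hk, notMem_critSet_add_mul_of_iterate_eq hp hpfix hy hyp k⟩

end PeriodicOrbit

section Phases

variable {X : Type*} [TopologicalSpace X] {f : X → X} {C : Set X} {p : X} {ℓ : ℕ}

lemma isOpen_fstar_iterate (hf : IsLocalHomeomorphOn f Cᶜ) (hC : IsClosed C) (n : ℕ)
    {A : Set X} (hA : IsOpen A) : IsOpen ((fstar f C)^[n] A) := by
  induction n with
  | zero => exact hA
  | succ n ih =>
    rw [iterate_succ_apply', isOpen_iff_mem_nhds]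
    rintro _ ⟨y, hy, rfl⟩
    rw [← hf.map_nhds_eq hy.2]
    exact Filter.image_mem_map ((ih.sdiff hC).mem_nhds hy)

lemma isOpen_setOf_iterate_mem (hf : IsLocalHomeomorphOn f Cᶜ) (hC : IsClosed C) (n : ℕ)
    {W : Set X} (hW : IsOpen W) : IsOpen {x | x ∉ critSet f C n ∧ f^[n] x ∈ W} := by
  induction n with
  | zero => simpa [critSet] using hW
  | succ n ih =>
    have h : {x | x ∉ critSet f C (n + 1) ∧ f^[n + 1] x ∈ W} =
        Cᶜ ∩ f ⁻¹' {x | x ∉ critSet f C n ∧ f^[n] x ∈ W} := by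
      ext x
      simp [notMem_critSet_succ, and_assoc]
    rw [h]
    exact hf.continuousOn.isOpen_inter_preimage hC.isOpen_compl ih

lemma exists_mem_closure_preimagesAt_modEq {T : Set ℕ} {m : ℕ} (hm : 0 < m) {x : X}
    (hT : Dense (preimagesAt f C T x)) (y : X) :
    ∃ c < m, y ∈ closure (preimagesAt f C (T ∩ {t | t ≡ c [MOD m]}) x) := by
  have hcover : preimagesAt f C T x ⊆
      ⋃ c : Fin m, preimagesAt f C (T ∩ {t | t ≡ c [MOD m]}) x := by
    rintro z ⟨t, ht, hz⟩
    exact mem_iUnion.2 ⟨⟨t % m, Nat.mod_lt t hm⟩, t, ⟨ht, (Nat.mod_modEq t m).symm⟩, hz⟩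
  have hy := (hT.mono hcover).closure_eq ▸ mem_univ y
  rw [closure_iUnion_of_finite] at hy
  obtain ⟨c, hc⟩ := mem_iUnion.1 hy
  exact ⟨c, c.isLt, hc⟩

def phase (f : X → X) (C : Set X) (p : X) (ℓ r : ℕ) : Set X :=
  closure (preimagesAt f C {t | t ≡ r [MOD ℓ]} p)

lemma mem_phase_of_iterate_mem (hf : IsLocalHomeomorphOn f Cᶜ) (hC : IsClosed C)
    {t r c : ℕ} {y : X} (hy : y ∉ critSet f C t) (hyr : f^[t] y ∈ phase f C p ℓ r)
    (hc : r + t ≡ c [MOD ℓ]) : y ∈ phase f C p ℓ c := by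
  refine mem_closure_iff.2 fun O hO hyO => ?_
  obtain ⟨_, hw, s, hs, hws, hwp⟩ := mem_closure_iff.1 hyr _ (isOpen_fstar_iterate hf hC t hO)
    (mem_fstar_iterate.2 ⟨y, hyO, hy, rfl⟩)
  obtain ⟨ξ, hξO, hξ, rfl⟩ := mem_fstar_iterate.1 hw
  refine ⟨ξ, hξO, t + s, ?_, notMem_critSet_add.2 ⟨hξ, hws⟩, ?_⟩
  · rw [add_comm]
    exact (Nat.ModEq.add_right t hs).trans hc
  · rw [add_comm, iterate_add_apply, hwp]

lemma mem_interior_phase_of_iterate_mem (hf : IsLocalHomeomorphOn f Cᶜ) (hC : IsClosed C)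
    {t r c : ℕ} {y : X} (hy : y ∉ critSet f C t)
    (hyr : f^[t] y ∈ interior (phase f C p ℓ r)) (hc : r + t ≡ c [MOD ℓ]) :
    y ∈ interior (phase f C p ℓ c) :=
  mem_interior.2 ⟨{z | z ∉ critSet f C t ∧ f^[t] z ∈ interior (phase f C p ℓ r)},
    fun _ hz => mem_phase_of_iterate_mem hf hC hz.1 (interior_subset hz.2) hc,
    isOpen_setOf_iterate_mem hf hC t isOpen_interior, hy, hyr⟩

lemma iterate_mem_phase (hf : IsLocalHomeomorphOn f Cᶜ) (hC : IsClosed C) (hℓ : 0 < ℓ)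
    (hp : p ∉ critSet f C ℓ) (hpfix : IsPeriodicPt f ℓ p) {t r c : ℕ} {y : X}
    (hy : y ∉ critSet f C t) (hyc : y ∈ phase f C p ℓ c) (hc : r + t ≡ c [MOD ℓ]) :
    f^[t] y ∈ phase f C p ℓ r := by
  refine mem_closure_iff.2 fun W hW hyW => ?_
  obtain ⟨ξ, ⟨hξ, hξW⟩, s, hs, hξs, hξp⟩ :=
    mem_closure_iff.1 hyc _ (isOpen_setOf_iterate_mem hf hC t hW) ⟨hy, hyW⟩
  -- going `t` more times around the cycle of `p` makes the orbit of `ξ` longer than `t`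
  obtain ⟨hξs', hξp'⟩ := notMem_critSet_add_mul_of_iterate_eq hp hpfix hξs hξp t
  have hts : t ≤ s + ℓ * t := le_add_left (Nat.le_mul_of_pos_left t hℓ)
  have hsplit : s + ℓ * t = t + (s + ℓ * t - t) := by omega
  rw [hsplit] at hξs' hξp'
  refine ⟨f^[t] ξ, hξW, s + ℓ * t - t, ?_, (notMem_critSet_add.1 hξs').2, ?_⟩
  · refine Nat.ModEq.add_right_cancel' t ?_
    rw [Nat.sub_add_cancel hts]
    exact ((Nat.add_mul_mod_self_left s ℓ t).trans hs).trans hc.symm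
  · rwa [add_comm, iterate_add_apply] at hξp'

lemma iterate_mem_interior_phase (hf : IsLocalHomeomorphOn f Cᶜ) (hC : IsClosed C)
    (hℓ : 0 < ℓ) (hp : p ∉ critSet f C ℓ) (hpfix : IsPeriodicPt f ℓ p) {t r c : ℕ} {y : X}
    (hy : y ∉ critSet f C t) (hyc : y ∈ interior (phase f C p ℓ c)) (hc : r + t ≡ c [MOD ℓ]) :
    f^[t] y ∈ interior (phase f C p ℓ r) := by
  refine mem_interior.2 ⟨(fstar f C)^[t] (interior (phase f C p ℓ c)), fun w hw => ?_,
    isOpen_fstar_iterate hf hC t isOpen_interior, mem_fstar_iterate.2 ⟨y, hyc, hy, rfl⟩⟩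
  obtain ⟨z, hz, hzt, rfl⟩ := mem_fstar_iterate.1 hw
  exact iterate_mem_phase hf hC hℓ hp hpfix hzt (interior_subset hz) hc

lemma mem_interior_phase_zero [BaireSpace X] (hf : IsLocalHomeomorphOn f Cᶜ) (hC : IsClosed C)
    (hℓ : 0 < ℓ) (hp : p ∉ critSet f C ℓ) (hpfix : IsPeriodicPt f ℓ p) {T : Set ℕ}
    (hdense : Dense (preimagesAt f C T p)) : p ∈ interior (phase f C p ℓ 0) := by
  have : Nonempty X := ⟨p⟩
  have hcover : ⋃ r : Fin ℓ, phase f C p ℓ r = univ := by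
    refine eq_univ_of_univ_subset (hdense.closure_eq ▸
      closure_minimal ?_ (isClosed_iUnion_of_finite fun _ => isClosed_closure))
    rintro y ⟨t, -, hy⟩
    exact mem_iUnion.2 ⟨⟨t % ℓ, Nat.mod_lt t hℓ⟩, subset_closure ⟨t, (Nat.mod_modEq t ℓ).symm, hy⟩⟩
  obtain ⟨r, q, hq⟩ := nonempty_interior_of_iUnion_of_closed (fun _ => isClosed_closure) hcover
  obtain ⟨ξ, hξ, t, ht, hξt, hξp⟩ := mem_closure_iff.1 (interior_subset hq) _ isOpen_interior hq
  have h := iterate_mem_interior_phase hf hC hℓ hp hpfix hξt hξ (r := 0) (by rwa [zero_add])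
  rwa [hξp] at h

lemma mem_interior_phase_of_iterate_mem_interior (hf : IsLocalHomeomorphOn f Cᶜ)
    (hC : IsClosed C) (hℓ : 0 < ℓ) (hp : p ∉ critSet f C ℓ) (hpfix : IsPeriodicPt f ℓ p)
    {t γ : ℕ} {z : X} (hz : z ∈ interior (phase f C p ℓ 0)) (hzt : z ∉ critSet f C t)
    (hzx : f^[t] z ∈ interior (phase f C p ℓ 0)) (hγ : γ + t ≡ 0 [MOD ℓ]) :
    p ∈ interior (phase f C p ℓ γ) := by
  have hz' : z ∈ interior (phase f C p ℓ t) :=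
    mem_interior_phase_of_iterate_mem hf hC hzt hzx (by rw [zero_add])
  obtain ⟨ξ, ⟨-, hξ⟩, s, hs, hξs, hξp⟩ := mem_closure_iff.1 (interior_subset hz') _
    (isOpen_interior.inter isOpen_interior) ⟨hz', hz⟩
  have h := iterate_mem_interior_phase hf hC hℓ hp hpfix hξs hξ ((Nat.ModEq.add_left γ hs).trans hγ)
  rwa [hξp] at h

lemma exists_modEq_mem_fstar_iterate (hp : p ∉ critSet f C ℓ) (hpfix : IsPeriodicPt f ℓ p)
    {m r r' : ℕ} (hm : 0 < m) (hℓm : ℓ ∣ m) (hr : r ≡ r' [MOD ℓ]) {W : Set X} (hW : IsOpen W)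
    (hWr : (W ∩ phase f C p ℓ r).Nonempty) : ∃ t, t ≡ r' [MOD m] ∧ p ∈ (fstar f C)^[t] W := by
  obtain ⟨w, hwW, hw⟩ := hWr
  obtain ⟨y, hyW, hy⟩ := mem_closure_iff.1 hw W hW hwW
  obtain ⟨t, ht, hyt, hyp⟩ := preimagesAt_modEq_subset hp hpfix hm hℓm hr hy
  exact ⟨t, ht, mem_fstar_iterate.2 ⟨y, hyW, hyt, hyp⟩⟩

theorem exists_dvd_mem_fstar_iterate (hf : IsLocalHomeomorphOn f Cᶜ) (hC : IsClosed C)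
    (hℓ : 0 < ℓ) (hp : p ∉ critSet f C ℓ) (hpfix : IsPeriodicPt f ℓ p) {m : ℕ} (hm : 0 < m)
    (hℓm : ℓ ∣ m) (hpU : p ∈ interior (phase f C p ℓ 0)) {x : X}
    (hxU : x ∈ interior (phase f C p ℓ 0)) {N : ℕ} (hx : Dense (preimagesAt f C (Ici N) x))
    {O : Set X} (hO : IsOpen O) (hOU : (O ∩ phase f C p ℓ 0).Nonempty) :
    ∃ t, N ≤ t ∧ m ∣ t ∧ x ∈ (fstar f C)^[t] O := by
  -- the residue of the last leg has to be fixed before the neighbourhood of `p` it enters is built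
  obtain ⟨c, hcm, hc⟩ := exists_mem_closure_preimagesAt_modEq hm hx p
  have hpγ : p ∈ interior (phase f C p ℓ (m - c)) := by
    obtain ⟨z, hzU, t, ⟨-, ht⟩, hzt, hzx⟩ := mem_closure_iff.1 hc _ isOpen_interior hpU
    refine mem_interior_phase_of_iterate_mem_interior hf hC hℓ hp hpfix hzU hzt (hzx ▸ hxU)
      (Nat.ModEq.of_dvd hℓm ?_)
    calc m - c + t ≡ m - c + c [MOD m] := Nat.ModEq.add_left _ ht
      _ = m := by omega
      _ ≡ 0 [MOD m] := Nat.mod_self m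
  obtain ⟨t₁, ht₁, hpt₁⟩ := exists_modEq_mem_fstar_iterate hp hpfix hm hℓm rfl hO hOU
  obtain ⟨u, hu, hpu⟩ := exists_modEq_mem_fstar_iterate hp hpfix hm hℓm rfl
    (isOpen_fstar_iterate hf hC t₁ hO) ⟨p, hpt₁, interior_subset hpγ⟩
  rw [← iterate_add_apply] at hpu
  obtain ⟨z, hzO, t₀, ⟨hNt₀, ht₀⟩, hzt₀, hzx⟩ :=
    mem_closure_iff.1 hc _ (isOpen_fstar_iterate hf hC (u + t₁) hO) hpu
  refine ⟨t₀ + (u + t₁), le_add_right hNt₀, (Nat.modEq_zero_iff_dvd).1 ?_, ?_⟩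
  · calc t₀ + (u + t₁) ≡ c + (m - c + 0) [MOD m] := ht₀.add (hu.add ht₁)
      _ = m := by omega
      _ ≡ 0 [MOD m] := Nat.mod_self m
  · rw [iterate_add_apply]
    exact mem_fstar_iterate.2 ⟨z, hzO, hzt₀, hzx⟩

/-- Removing `C` makes every point of the domain an iterate of a point outside `C`, whose
preimages are dense by strong transitivity. -/
def phaseDomain (f : X → X) (C : Set X) (p : X) (ℓ : ℕ) : Set X :=
  ⋃ s, (fstar f C)^[ℓ * s] (interior (phase f C p ℓ 0) \ C)

lemma isOpen_phaseDomain (hf : IsLocalHomeomorphOn f Cᶜ) (hC : IsClosed C) :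
    IsOpen (phaseDomain f C p ℓ) :=
  isOpen_iUnion fun _ => isOpen_fstar_iterate hf hC _ (isOpen_interior.sdiff hC)

lemma interior_phase_sdiff_subset_phaseDomain :
    interior (phase f C p ℓ 0) \ C ⊆ phaseDomain f C p ℓ :=
  subset_iUnion_of_subset 0 (by simp)

lemma fstar_iterate_mul_phaseDomain_subset (q : ℕ) :
    (fstar f C)^[ℓ * q] (phaseDomain f C p ℓ) ⊆ phaseDomain f C p ℓ := by
  intro x hx
  obtain ⟨y, hy, hyq, rfl⟩ := mem_fstar_iterate.1 hx
  obtain ⟨s, hs⟩ := mem_iUnion.1 hy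
  refine mem_iUnion.2 ⟨q + s, ?_⟩
  rw [mul_add, iterate_add_apply]
  exact mem_fstar_iterate.2 ⟨y, hs, hyq, rfl⟩

lemma phaseDomain_subset_interior_phase (hf : IsLocalHomeomorphOn f Cᶜ) (hC : IsClosed C)
    (hℓ : 0 < ℓ) (hp : p ∉ critSet f C ℓ) (hpfix : IsPeriodicPt f ℓ p) :
    phaseDomain f C p ℓ ⊆ interior (phase f C p ℓ 0) := by
  intro x hx
  obtain ⟨s, hs⟩ := mem_iUnion.1 hx
  obtain ⟨y, hy, hys, rfl⟩ := mem_fstar_iterate.1 hs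
  exact iterate_mem_interior_phase hf hC hℓ hp hpfix hys hy.1
    (by rw [zero_add]; exact Nat.modEq_zero_iff_dvd.2 (dvd_mul_right ℓ s))

lemma mem_phaseDomain_of_iterate_mem (hf : IsLocalHomeomorphOn f Cᶜ) (hC : IsClosed C)
    (hℓ : 0 < ℓ) (hp : p ∉ critSet f C ℓ) (hpfix : IsPeriodicPt f ℓ p) {t : ℕ} {x y : X}
    (hx : x ∈ phaseDomain f C p ℓ) (hy : y ∉ critSet f C t) (hyx : f^[t] y = x) (ht : ℓ ∣ t) :
    y ∈ phaseDomain f C p ℓ := by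
  rcases Nat.eq_zero_or_pos t with rfl | htpos
  · rwa [← hyx] at hx
  refine interior_phase_sdiff_subset_phaseDomain ⟨?_, notMem_critSet_iff.1 hy 0 htpos⟩
  refine mem_interior_phase_of_iterate_mem hf hC hy
    (hyx ▸ phaseDomain_subset_interior_phase hf hC hℓ hp hpfix hx) ?_
  rw [zero_add]
  exact Nat.modEq_zero_iff_dvd.2 ht

end Phases

lemma dense_preimagesAt_Ici {f : X → X} {C : Set X} (hst : StronglyTransitiveMap f Cᶜ)
    {x : X} (hx : x ∉ C) (N : ℕ) : Dense (preimagesAt f C (Ici N) x) := by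
  have hα : Dense (⋃ k, preImg f Cᶜ univ k (preImg f Cᶜ univ N {x})) := by
    rw [dense_iff_closure_eq, eq_univ_iff_forall]
    intro y
    have hy : y ∈ alphaLim f Cᶜ univ x := by rw [hst x hx]; trivial
    exact mem_iInter.1 hy N
  refine hα.mono ?_
  rintro y hy
  obtain ⟨k, -, hyk, -, hyN, hyx⟩ := mem_iUnion.1 hy
  refine ⟨k + N, mem_Ici.2 (le_add_left le_rfl), notMem_critSet_add.2
    ⟨notMem_critSet_iff.2 fun i hi => (hyk i hi).1, notMem_critSet_iff.2 fun i hi => (hyN i hi).1⟩,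
    by rw [add_comm, iterate_add_apply]; exact hyx⟩

lemma mem_alphaLim_of_forall_chain {g : X → X} {good W : Set X} {x z : X}
    (h : ∀ n O, IsOpen O → z ∈ O → ∃ ζ ∈ O, ∃ q, n ≤ q ∧ (∀ b ≤ q, g^[b] ζ ∈ W) ∧
      (∀ b < q, g^[b] ζ ∈ good) ∧ g^[q] ζ = x) :
    z ∈ alphaLim g good W x := by
  refine mem_iInter.2 fun n => mem_closure_iff.2 fun O hO hzO => ?_
  obtain ⟨ζ, hζO, q, hnq, hW, hgood, hx⟩ := h n O hO hzO
  refine ⟨ζ, hζO, mem_iUnion.2 ⟨q - n, hW 0 (Nat.zero_le _),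
    fun i hi => ⟨hgood i (by omega), hW i (by omega)⟩, hW _ (by omega), fun i hi => ?_, ?_⟩⟩
  · rw [← iterate_add_apply]
    exact ⟨hgood _ (by omega), hW _ (by omega)⟩
  · rw [← iterate_add_apply, Nat.add_sub_cancel' hnq]
    exact hx

lemma compl_subset_iUnion_fstar_iterate {f : X → X} {C : Set X} (hst : StronglyTransitiveMap f Cᶜ)
    {ℓ : ℕ} (hℓ : 0 < ℓ) {V : Set X} (hV : IsOpen V) (hVne : V.Nonempty)
    (hVinv : ∀ q, (fstar f C)^[ℓ * q] V ⊆ V) : Cᶜ ⊆ ⋃ j < ℓ, (fstar f C)^[j] V := by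
  intro x hx
  obtain ⟨y, hyV, t, -, hyt, hyx⟩ := (dense_preimagesAt_Ici hst hx 0).inter_open_nonempty V hV hVne
  have hxt : x ∈ (fstar f C)^[t % ℓ + ℓ * (t / ℓ)] V := by
    rw [Nat.mod_add_div]
    exact mem_fstar_iterate.2 ⟨y, hyV, hyt, hyx⟩
  rw [iterate_add_apply] at hxt
  exact mem_iUnion₂.2 ⟨t % ℓ, Nat.mod_lt t hℓ, fstar_iterate_mono _ (hVinv _) hxt⟩

lemma dense_preimagesAt_of_mem_phaseDomain {f : X → X} {C : Set X} {p : X} {ℓ : ℕ}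
    (hst : StronglyTransitiveMap f Cᶜ) {x : X} (hx : x ∈ phaseDomain f C p ℓ) (N : ℕ) :
    Dense (preimagesAt f C (Ici N) x) := by
  obtain ⟨s, hs⟩ := mem_iUnion.1 hx
  obtain ⟨y, hy, hys, rfl⟩ := mem_fstar_iterate.1 hs
  exact (dense_preimagesAt_Ici hst hy.2 N).mono (preimagesAt_Ici_subset hys)

theorem stronglyTransitiveOnSet_phaseDomain {f : X → X} {C : Set X} {p : X} {ℓ : ℕ}
    (hf : IsLocalHomeomorphOn f Cᶜ) (hC : IsClosed C) (hℓ : 0 < ℓ) (hp : p ∉ critSet f C ℓ)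
    (hpfix : IsPeriodicPt f ℓ p) (hst : StronglyTransitiveMap f Cᶜ)
    (hpU : p ∈ interior (phase f C p ℓ 0)) {m : ℕ} (hm : 0 < m) (hℓm : ℓ ∣ m) :
    StronglyTransitiveOnSet (f^[m]) (critSet f C m)ᶜ (phaseDomain f C p ℓ) := by
  have hVU := phaseDomain_subset_interior_phase hf hC hℓ hp hpfix
  intro x hx z hz
  refine subset_closure (mem_alphaLim_of_forall_chain fun n O hO hzO => ?_)
  obtain ⟨_, hnt, ⟨q, rfl⟩, hxq⟩ := exists_dvd_mem_fstar_iterate hf hC hℓ hp hpfix hm hℓm hpU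
    (hVU hx) (dense_preimagesAt_of_mem_phaseDomain hst hx (m * n)) hO
    ⟨z, hzO, interior_subset (hVU hz)⟩
  obtain ⟨ζ, hζO, hζ, hζx⟩ := mem_fstar_iterate.1 hxq
  refine ⟨ζ, hζO, q, Nat.le_of_mul_le_mul_left hnt hm, fun b hb => ?_, fun b hb => ?_, ?_⟩
  · rw [← iterate_mul]
    have hsplit : m * b + m * (q - b) = m * q := by rw [← mul_add, Nat.add_sub_cancel' hb]
    refine mem_phaseDomain_of_iterate_mem hf hC hℓ hp hpfix hx
      (iterate_notMem_critSet hζ hsplit.le) ?_ (hℓm.mul_right _)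
    rw [← iterate_add_apply, add_comm, hsplit, hζx]
  · rw [← iterate_mul]
    exact iterate_notMem_critSet hζ (by nlinarith)
  · rwa [← iterate_mul]

theorem stmt11_general [BaireSpace X]
    (C : Set X) (hCcl : IsClosed C)
    (f : X → X) (hf : IsLocalHomeomorphOn f Cᶜ)
    (hst : StronglyTransitiveMap f Cᶜ)
    (hper : ∃ n : ℕ, 1 ≤ n ∧ ∃ x : X, x ∉ critSet f C n ∧ f^[n] x = x)
    (ℓ : ℕ)
    (hℓ : ℓ = sInf {n : ℕ | 1 ≤ n ∧ ∃ x : X, x ∉ critSet f C n ∧ f^[n] x = x}) :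
    ∃ V : Set X, IsOpen V ∧
      Cᶜ ⊆ ⋃ j < ℓ, (fstar f C)^[j] V ∧
      (fstar f C)^[ℓ] V ⊆ V ∧
      ∀ j : ℕ, 1 ≤ j →
        StronglyTransitiveOnSet (f^[ℓ * j]) (critSet f C (ℓ * j))ᶜ V := by
  obtain ⟨hℓpos, p, hp, hpfix⟩ : 1 ≤ ℓ ∧ ∃ x : X, x ∉ critSet f C ℓ ∧ f^[ℓ] x = x :=
    hℓ ▸ Nat.sInf_mem hper
  have hpC : p ∉ C := notMem_critSet_iff.1 hp 0 hℓpos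
  have hpU : p ∈ interior (phase f C p ℓ 0) :=
    mem_interior_phase_zero hf hCcl hℓpos hp hpfix (dense_preimagesAt_Ici hst hpC 0)
  have hVopen := isOpen_phaseDomain hf hCcl (p := p) (ℓ := ℓ)
  refine ⟨phaseDomain f C p ℓ, hVopen,
    compl_subset_iUnion_fstar_iterate hst hℓpos hVopen
      ⟨p, interior_phase_sdiff_subset_phaseDomain ⟨hpU, hpC⟩⟩ fstar_iterate_mul_phaseDomain_subset,
    by simpa using fstar_iterate_mul_phaseDomain_subset (C := C) (p := p) (ℓ := ℓ) 1,
    fun j hj => stronglyTransitiveOnSet_phaseDomain hf hCcl hℓpos hp hpfix hst hpU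
      (Nat.mul_pos hℓpos hj) (dvd_mul_right ℓ j)⟩

theorem stmt11 [TopologicalSpace.SeparableSpace X] [BaireSpace X]
    (hballs : ∀ x : X, ∃ γ : ℝ, 0 < γ ∧ IsCompact (Metric.closedBall x γ) ∧
      ∀ ε : ℝ, 0 < ε → ε ≤ γ → IsConnected (Metric.ball x ε))
    (C : Set X) (hCcl : IsClosed C) (hCint : interior C = ∅)
    (f : X → X) (hf : IsLocalHomeomorphOn f Cᶜ)
    (hfib : ∀ x : X, {y | y ∉ C ∧ f y = x}.Finite)
    (hst : StronglyTransitiveMap f Cᶜ)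
    (hper : ∃ n : ℕ, 1 ≤ n ∧ ∃ x : X, x ∉ critSet f C n ∧ f^[n] x = x)
    (ℓ : ℕ)
    (hℓ : ℓ = sInf {n : ℕ | 1 ≤ n ∧ ∃ x : X, x ∉ critSet f C n ∧ f^[n] x = x}) :
    ∃ V : Set X, IsOpen V ∧
      Cᶜ ⊆ ⋃ j < ℓ, (fstar f C)^[j] V ∧
      (fstar f C)^[ℓ] V ⊆ V ∧
      ∀ j : ℕ, 1 ≤ j →
        StronglyTransitiveOnSet (f^[ℓ * j]) (critSet f C (ℓ * j))ᶜ V :=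
  stmt11_general C hCcl f hf hst hper ℓ hℓ
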